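/- arXiv:1810.03960 — 4 statements merged into one kernel-verified Lean document; each statement's English description precedes it below -/
import Mathlib

section
/- Let p be an odd prime and suppose there exist a, δ ∈ F_p with δ² = 1, 2a² − 3a + 2 = 0, and t := δ(2a−1)i (where i² = −1 in F_p or an extension) is a root of p₊(t) or p₋(t) where p_±(t) = t(t²−2) ± (t²−1). Then p = 29. -/
/-!
Since `δ² = 1` and `i² = -1`, the root `t` satisfies `t² = -(2a - 1)²`, which the relation
`2a² = 3a - 2` reduces to `t² = 3 - 2a`. Multiplying `t(t² - 2) = ∓(t² - 1)` by its conjugate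
gives an equation in `t²` alone, which becomes linear in `a`: `8a = 5`. Substituting back into
`2a² - 3a + 2 = 0` leaves `29 = 0`, so the characteristic is `29`.
-/

section CommRing

variable {R : Type*} [CommRing R]

theorem sq_mul_sub_two_sq_eq_sub_one_sq_of_root {t : R}
    (hroot : t * (t ^ 2 - 2) + (t ^ 2 - 1) = 0 ∨ t * (t ^ 2 - 2) - (t ^ 2 - 1) = 0) :
    t ^ 2 * (t ^ 2 - 2) ^ 2 = (t ^ 2 - 1) ^ 2 := by
  rcases hroot with h | h
  · linear_combination (t * (t ^ 2 - 2) - (t ^ 2 - 1)) * h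
  · linear_combination (t * (t ^ 2 - 2) + (t ^ 2 - 1)) * h

theorem twentynine_eq_zero_of_sq_eq {a s : R} (ha : 2 * a ^ 2 - 3 * a + 2 = 0)
    (hs : s = -(2 * a - 1) ^ 2) (hrel : s * (s - 2) ^ 2 = (s - 1) ^ 2) :
    (29 : R) = 0 := by
  have hs' : s = 3 - 2 * a := by linear_combination hs - 2 * ha
  have hlin : 8 * a = 5 := by
    rw [hs'] at hrel
    linear_combination hrel + (4 * a - 2) * ha
  linear_combination 32 * ha - (8 * a - 7) * hlin

theorem sq_mul_mul_eq_neg_sq {D i : R} (hD : D ^ 2 = 1) (hi : i ^ 2 = -1) (x : R) :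
    (D * x * i) ^ 2 = -x ^ 2 := by
  linear_combination (x ^ 2 * i ^ 2) * hD + x ^ 2 * hi

end CommRing

theorem CharP.eq_of_natCast_prime_eq_zero {R : Type*} [NonAssocRing R] [Nontrivial R]
    {p q : ℕ} [CharP R p] (hq : q.Prime) (h : (q : R) = 0) : p = q :=
  (hq.eq_one_or_self_of_dvd p ((CharP.cast_eq_zero_iff R p q).mp h)).resolve_left
    (CharP.char_ne_one R p)

theorem prime_eq_twentynine_general
    (p : ℕ)
    (K : Type*) [Field K] [CharP K p]
    (a δ : ZMod p) (hδ : δ ^ 2 = 1) (ha : 2 * a ^ 2 - 3 * a + 2 = 0)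
    (i : K) (hi : i ^ 2 = -1)
    (t : K)
    (ht : t = (ZMod.castHom (dvd_refl p) K δ) *
        (2 * (ZMod.castHom (dvd_refl p) K a) - 1) * i)
    (hroot : t * (t ^ 2 - 2) + (t ^ 2 - 1) = 0 ∨
      t * (t ^ 2 - 2) - (t ^ 2 - 1) = 0) :
    p = 29 := by
  set f := ZMod.castHom (dvd_refl p) K
  have hD : f δ ^ 2 = 1 := by rw [← map_pow, hδ, map_one]
  have hA : 2 * f a ^ 2 - 3 * f a + 2 = 0 := by simpa [map_ofNat] using congrArg f ha
  have h29 : ((29 : ℕ) : K) = 0 := by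
    exact_mod_cast twentynine_eq_zero_of_sq_eq hA (ht ▸ sq_mul_mul_eq_neg_sq hD hi _)
      (sq_mul_sub_two_sq_eq_sub_one_sq_of_root hroot)
  exact CharP.eq_of_natCast_prime_eq_zero (by norm_num) h29

/-- Let `p` be an odd prime and suppose there exist `a, δ ∈ F_p`
with `δ² = 1`, `2a² − 3a + 2 = 0`, and `t := δ(2a−1)i` (where `i² = −1` in `F_p` or
an extension field `K`) is a root of `p₊` or `p₋`, where `p_±(t) = t(t²−2) ± (t²−1)`.
Then `p = 29`. -/
theorem prime_eq_twentynine
    (p : ℕ) (hp : p.Prime) (hodd : p ≠ 2)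
    (K : Type*) [Field K] [CharP K p]
    (a δ : ZMod p) (hδ : δ ^ 2 = 1) (ha : 2 * a ^ 2 - 3 * a + 2 = 0)
    (i : K) (hi : i ^ 2 = -1)
    (t : K)
    (ht : t = (ZMod.castHom (dvd_refl p) K δ) *
        (2 * (ZMod.castHom (dvd_refl p) K a) - 1) * i)
    (hroot : t * (t ^ 2 - 2) + (t ^ 2 - 1) = 0 ∨
      t * (t ^ 2 - 2) - (t ^ 2 - 1) = 0) :
    p = 29 :=
  prime_eq_twentynine_general p K a δ hδ ha i hi t ht hroot
end

section
/- Let ω satisfy ω² + ω + 1 = 0 in F_p (p prime, p ≡ 1 mod 3, p ≠ 7), and suppose there exist a, b, c ∈ F_p with a ≠ 0, a² + bc + 1 = 0, 3a² = ω − 2, and t with t² = 2 − ω a root of p₊(t) or p₋(t), where p_±(t) = t(t²−2) ± (t²−1). Then p = 13 (and ω = 3 in F₁₃). -/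
/-!
Substituting `t² = 2 - ω` into `p_±(t)` collapses it to `∓ tω + (1 - ω)`, so `tω = ±(1 - ω)`.
Squaring gives `(2 - ω) ω² = (1 - ω)²`, which together with `ω² + ω + 1 = 0` forces `ω = 3`;
then `ω² + ω + 1 = 13` vanishes in `F_p`, so `p = 13`.
-/

section CommRing

variable {R : Type*} [CommRing R] {t x : R}

theorem two_sub_mul_sq_eq_one_sub_sq_of_sq_eq_two_sub (ht : t ^ 2 = 2 - x)
    (hroot : t * (t ^ 2 - 2) + (t ^ 2 - 1) = 0 ∨ t * (t ^ 2 - 2) - (t ^ 2 - 1) = 0) :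
    (2 - x) * x ^ 2 = (1 - x) ^ 2 := by
  have htx : t * x = 1 - x ∨ t * x = x - 1 := by
    rcases hroot with h | h
    · exact .inl (by linear_combination -h + (t + 1) * ht)
    · exact .inr (by linear_combination -h + (t - 1) * ht)
  rw [← ht]
  rcases htx with h | h
  · linear_combination (t * x + (1 - x)) * h
  · linear_combination (t * x + (x - 1)) * h

theorem eq_three_of_two_sub_mul_sq_eq_one_sub_sq (hx : x ^ 2 + x + 1 = 0)
    (h : (2 - x) * x ^ 2 = (1 - x) ^ 2) : x = 3 := by
  linear_combination h + (x - 2) * hx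

end CommRing

theorem Nat.Prime.eq_thirteen_of_three_sq_add_three_add_one_eq_zero {p : ℕ} (hp : p.Prime)
    (h : (3 : ZMod p) ^ 2 + 3 + 1 = 0) : p = 13 := by
  have h13 : ((13 : ℕ) : ZMod p) = 0 := by push_cast; linear_combination h
  exact (Nat.prime_dvd_prime_iff_eq hp (by norm_num)).mp ((ZMod.natCast_eq_zero_iff 13 p).mp h13)

theorem prime_eq_thirteen_of_omega_general
    (p : ℕ) (hp : p.Prime)
    (K : Type*) [Field K] [CharP K p]
    (ω : ZMod p) (hω : ω ^ 2 + ω + 1 = 0)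
    (t : K) (ht : t ^ 2 = ZMod.castHom (dvd_refl p) K (2 - ω))
    (hroot : t * (t ^ 2 - 2) + (t ^ 2 - 1) = 0 ∨
      t * (t ^ 2 - 2) - (t ^ 2 - 1) = 0) :
    p = 13 ∧ ω = 3 := by
  have := Fact.mk hp
  set f := ZMod.castHom (dvd_refl p) K
  have hfω : f ω ^ 2 + f ω + 1 = 0 := by simpa using congrArg f hω
  have ht' : t ^ 2 = 2 - f ω := by rw [ht, map_sub, map_ofNat]
  have hfω3 : f ω = 3 := eq_three_of_two_sub_mul_sq_eq_one_sub_sq hfω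
    (two_sub_mul_sq_eq_one_sub_sq_of_sq_eq_two_sub ht' hroot)
  have hω3 : ω = 3 := f.injective (by rw [hfω3, map_ofNat])
  exact ⟨hp.eq_thirteen_of_three_sq_add_three_add_one_eq_zero (hω3 ▸ hω), hω3⟩

/-- Let `ω` satisfy `ω² + ω + 1 = 0` in `F_p` (`p` prime,
`p ≡ 1 mod 3`, `p ≠ 7`), and suppose there exist `a, b, c ∈ F_p` with `a ≠ 0`,
`a² + bc + 1 = 0`, `3a² = ω − 2`, and `t` (in `F_p` or a quadratic extension `K`)
with `t² = 2 − ω` a root of `p₊(t)` or `p₋(t)`, where `p_±(t) = t(t²−2) ± (t²−1)`.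
Then `p = 13` (and `ω = 3` in `F₁₃`). -/
theorem prime_eq_thirteen_of_omega
    (p : ℕ) (hp : p.Prime) (hmod : p % 3 = 1) (hp7 : p ≠ 7)
    (K : Type*) [Field K] [CharP K p]
    (ω a b c : ZMod p) (hω : ω ^ 2 + ω + 1 = 0)
    (ha0 : a ≠ 0) (habc : a ^ 2 + b * c + 1 = 0) (h3a : 3 * a ^ 2 = ω - 2)
    (t : K) (ht : t ^ 2 = ZMod.castHom (dvd_refl p) K (2 - ω))
    (hroot : t * (t ^ 2 - 2) + (t ^ 2 - 1) = 0 ∨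
      t * (t ^ 2 - 2) - (t ^ 2 - 1) = 0) :
    p = 13 ∧ ω = 3 :=
  prime_eq_thirteen_of_omega_general p hp K ω hω t ht hroot
end

section
/- Let G be a transitive permutation group of degree 15 containing an element of order 7 and a 3-cycle, all of whose listed generators are even permutations. Then G = A₁₅. -/
/-!
Every block of a transitive group of degree 15 has size 1, 3, 5 or 15, and a block of size 3
or 5 has 5 or 3 translates. An element of order 7 generates a 7-group, and a 7-group acting on
fewer than 7 objects fixes each of them; so it would stabilise every translate of a nontrivial
block and then fix every point of it, i.e. be trivial. Hence `G` is primitive, and by Jordan's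
theorem a primitive group containing a 3-cycle contains the alternating group.
-/

open MulAction Pointwise

theorem IsPGroup.smul_eq_of_ncard_orbit_lt {p : ℕ} [Fact p.Prime] {P α : Type*} [Group P]
    [MulAction P α] [Finite α] (hP : IsPGroup p P) {a : α} (h : (orbit P a).ncard < p)
    (g : P) : g • a = a := by
  obtain ⟨n, hn⟩ := hP.card_orbit a
  rw [Nat.card_coe_set_eq] at hn
  have hn0 : n = 0 := by
    by_contra hn0
    exact absurd (hn ▸ h) (not_lt.mpr (Nat.le_self_pow hn0 p))
  obtain ⟨b, hb⟩ := Set.ncard_eq_one.mp (by rw [hn, hn0, pow_zero])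
  have hga : g • a ∈ orbit P a := mem_orbit a g
  have ha : a ∈ orbit P a := mem_orbit_self a
  rw [hb, Set.mem_singleton_iff] at hga ha
  rw [hga, ha]

theorem IsPGroup.smul_eq_of_ncard_lt_of_ncard_orbit_lt {G X : Type*} [Group G] [MulAction G X]
    [IsPretransitive G X] [Finite X] {p : ℕ} [Fact p.Prime] {P : Subgroup G}
    (hP : IsPGroup p P) {B : Set X} (hBne : B.Nonempty)
    (hB_lt : B.ncard < p) (horbit_lt : (orbit G B).ncard < p) {g : G} (hg : g ∈ P) (x : X) :
    g • x = x := by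
  obtain ⟨b, hb⟩ := hBne
  obtain ⟨h, rfl⟩ := exists_smul_eq G b x
  have hfix : ∀ k : P, (k : G) • h • B = h • B := by
    refine hP.smul_eq_of_ncard_orbit_lt (lt_of_le_of_lt (Set.ncard_le_ncard ?_) horbit_lt)
    rintro _ ⟨k, rfl⟩
    exact ⟨k * h, mul_smul (k : G) h B⟩
  refine hP.smul_eq_of_ncard_orbit_lt (a := h • b) ?_ ⟨g, hg⟩
  calc (orbit P (h • b)).ncard ≤ (h • B).ncard := by
        refine Set.ncard_le_ncard ?_ (Set.toFinite _)
        rintro _ ⟨k, rfl⟩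
        rw [← hfix k]
        exact Set.smul_mem_smul_set (Set.smul_mem_smul_set hb)
    _ = B.ncard := Set.ncard_smul_set h B
    _ < p := hB_lt

/-- The bound on `Nat.card X` says that in every factorisation `Nat.card X = d * m` with
`d, m ≥ 2` both factors are smaller than `p`. -/
theorem MulAction.IsPreprimitive.of_isPGroup {G X : Type*} [Group G] [MulAction G X]
    [IsPretransitive G X] [Finite X] {p : ℕ} [Fact p.Prime] {P : Subgroup G}
    (hP : IsPGroup p P) {g : G} (hg : g ∈ P) {x : X} (hgx : g • x ≠ x)
    (hcard : Nat.card X < p * (Nat.card X).minFac) : IsPreprimitive G X where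
  isTrivialBlock_of_isBlock {B} hB := by
    rcases B.eq_empty_or_nonempty with rfl | hBne
    · exact Or.inl Set.subsingleton_empty
    have hmul := hB.ncard_block_mul_ncard_orbit_eq hBne
    by_cases hm : (orbit G B).ncard < 2
    · exact Or.inr (hB.eq_univ_of_card_lt (by nlinarith [hBne.ncard_pos]))
    by_cases hd : B.ncard < 2
    · exact Or.inl (hB.subsingleton_of_card_lt (by nlinarith))
    have hlt : ∀ d m, d * m = Nat.card X → 2 ≤ m → d < p := fun d m hdm hm => by
      have := Nat.minFac_le_of_dvd hm (Dvd.intro_left d hdm)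
      nlinarith
    exact absurd (hP.smul_eq_of_ncard_lt_of_ncard_orbit_lt hBne (hlt _ _ hmul (not_lt.mp hm))
      (hlt _ _ ((mul_comm _ _).trans hmul) (not_lt.mp hd)) hg x) hgx

/-- Let `G` be a transitive permutation group of degree 15
containing an element of order 7 and a 3-cycle, and consisting of even
permutations. Then `G = A₁₅`. -/
theorem transitive_degree_fifteen_eq_alternating
    (G : Subgroup (Equiv.Perm (Fin 15)))
    (htrans : MulAction.IsPretransitive G (Fin 15))
    (σ : Equiv.Perm (Fin 15)) (hσ : σ ∈ G) (hσ7 : orderOf σ = 7)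
    (τ : Equiv.Perm (Fin 15)) (hτ : τ ∈ G) (hτ3 : Equiv.Perm.IsThreeCycle τ)
    (heven : G ≤ alternatingGroup (Fin 15)) :
    G = alternatingGroup (Fin 15) := by
  have : Fact (Nat.Prime 7) := ⟨by norm_num⟩
  obtain ⟨x, hx⟩ : ∃ x, σ x ≠ x := by
    by_contra! h
    rw [show σ = 1 from Equiv.ext h, orderOf_one] at hσ7
    omega
  have hP : IsPGroup 7 (Subgroup.zpowers (⟨σ, hσ⟩ : G)) :=
    IsPGroup.of_card (n := 1) (by rw [Nat.card_zpowers, Subgroup.orderOf_mk, hσ7, pow_one])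
  have hprim : IsPreprimitive G (Fin 15) :=
    IsPreprimitive.of_isPGroup hP (Subgroup.mem_zpowers _) hx
      (by norm_num [Nat.card_eq_fintype_card])
  exact le_antisymm heven
    (Equiv.Perm.alternatingGroup_le_of_isPreprimitive_of_isThreeCycle_mem hprim hτ3 hτ)
end

section
/- Let M be a group having a presentation with generators A_i, B_i (i = 1,…,g), X_j (j = 1,…,α), Y_k (k = 1,…,β), Z_l (l = 1,…,γ) and relations ∏[A_i,B_i]·∏X_j·∏Y_k·∏Z_l = X_j³ = Y_k² = Z_l⁷ = 1. Then M/(M′M²) is an elementary abelian 2-group of rank 2g + β − 1 (when β ≥ 1), and hence M has exactly 2^{2g+β−1} − 1 subgroups of index 2. -/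
open scoped commutatorElement

/-- Generators of the Fuchsian presentation of signature `(g; 3^[α], 2^[β], 7^[γ])`:
`A_i, B_i` (`i < g`), `X_j` (`j < α`), `Y_k` (`k < β`), `Z_l` (`l < γ`). -/
def FuchsianGens (g α β γ : ℕ) : Type :=
  (Fin g ⊕ Fin g) ⊕ (Fin α ⊕ Fin β ⊕ Fin γ)

namespace FuchsianGens

variable {g α β γ : ℕ}

def A (i : Fin g) : FreeGroup (FuchsianGens g α β γ) := FreeGroup.of (.inl (.inl i))
def B (i : Fin g) : FreeGroup (FuchsianGens g α β γ) := FreeGroup.of (.inl (.inr i))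
def X (j : Fin α) : FreeGroup (FuchsianGens g α β γ) := FreeGroup.of (.inr (.inl j))
def Y (k : Fin β) : FreeGroup (FuchsianGens g α β γ) :=
  FreeGroup.of (.inr (.inr (.inl k)))
def Z (l : Fin γ) : FreeGroup (FuchsianGens g α β γ) :=
  FreeGroup.of (.inr (.inr (.inr l)))

/-- The long relator `∏ᵢ[Aᵢ,Bᵢ] · ∏ⱼXⱼ · ∏ₖYₖ · ∏ₗZₗ`. -/
def longRelator (g α β γ : ℕ) : FreeGroup (FuchsianGens g α β γ) :=
  ((List.finRange g).map (fun i => ⁅(A i : FreeGroup (FuchsianGens g α β γ)), B i⁆)).prod *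
    ((List.finRange α).map X).prod *
    ((List.finRange β).map Y).prod *
    ((List.finRange γ).map Z).prod

/-- The relators: the long relator together with `Xⱼ³`, `Yₖ²`, `Zₗ⁷`. -/
def rels (g α β γ : ℕ) : Set (FreeGroup (FuchsianGens g α β γ)) :=
  {r | (∃ j, r = X j ^ 3) ∨ (∃ k, r = Y k ^ 2) ∨ (∃ l, r = Z l ^ 7) ∨
    r = longRelator g α β γ}

end FuchsianGens

/-- The group with the standard Fuchsian presentation of signature
`(g; 3^[α], 2^[β], 7^[γ])`. -/
def FuchsianGroup (g α β γ : ℕ) : Type :=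
  PresentedGroup (FuchsianGens.rels g α β γ)

noncomputable instance (g α β γ : ℕ) : Group (FuchsianGroup g α β γ) :=
  inferInstanceAs (Group (PresentedGroup (FuchsianGens.rels g α β γ)))

/-- `M′M²`: the subgroup generated by commutators and squares. -/
def commSq (M : Type*) [Group M] : Subgroup M :=
  commutator M ⊔ Subgroup.closure {x : M | ∃ y : M, x = y ^ 2}

instance commSq_normal (M : Type*) [Group M] : (commSq M).Normal := by
  constructor
  intro n hn gg
  have h1 : ⁅gg, n⁆ ∈ commutator M :=
    Subgroup.commutator_mem_commutator (Subgroup.mem_top gg) (Subgroup.mem_top n)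
  have h2 : gg * n * gg⁻¹ = ⁅gg, n⁆ * n := by group
  rw [h2]
  exact Subgroup.mul_mem _ ((le_sup_left : commutator M ≤ commSq M) h1) hn


/-! Killing commutators and squares turns the presentation into that of an `𝔽₂`-vector space:
each `X_j` and `Z_l` has odd order and so dies, and the long relator becomes `∑ₖ Y_k = 0`, which
leaves `A_i, B_i, Y_0, …, Y_{β-2}` as a basis. An index-2 subgroup is the kernel of a unique
nonzero homomorphism to `ℤ/2`, and these all factor through `M/(M′M²) ≅ 𝔽₂^(2g+β-1)`. -/

lemma Multiplicative.zmodTwo_eq_ofAdd_one {x : Multiplicative (ZMod 2)} (hx : x ≠ 1) :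
    x = .ofAdd 1 := by
  revert x; decide

lemma pi_zmodTwo_add_self {ι : Type*} (v : ι → ZMod 2) : v + v = 0 :=
  funext fun _ => CharTwo.add_self_eq_zero _

lemma multiplicative_pi_zmodTwo_sq {ι : Type*} (x : Multiplicative (ι → ZMod 2)) : x ^ 2 = 1 :=
  (sq x).trans (congrArg Multiplicative.ofAdd (pi_zmodTwo_add_self x.toAdd))

namespace Subgroup

variable {G : Type*} [Group G]

def toZModTwo (H : Subgroup G) (hH : H.index = 2) [DecidablePred (· ∈ H)] :
    G →* Multiplicative (ZMod 2) :=
  MonoidHom.mk' (fun x => if x ∈ H then 1 else .ofAdd 1) fun a b => by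
    by_cases ha : a ∈ H <;> by_cases hb : b ∈ H <;>
      simp [mul_mem_iff_of_index_two hH, ha, hb, ← ofAdd_add, CharTwo.add_self_eq_zero]

lemma ker_toZModTwo (H : Subgroup G) (hH : H.index = 2) [DecidablePred (· ∈ H)] :
    (H.toZModTwo hH).ker = H := by
  ext x
  by_cases hx : x ∈ H <;> simp [toZModTwo, hx]

end Subgroup

lemma MonoidHom.index_ker_eq_two {G : Type*} [Group G] {f : G →* Multiplicative (ZMod 2)}
    (hf : f ≠ 1) : f.ker.index = 2 := by
  have : Fact (Nat.card (Multiplicative (ZMod 2))).Prime := ⟨by simp [Nat.prime_two]⟩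
  have hrange : f.range = ⊤ :=
    f.range.eq_bot_or_eq_top_of_prime_card.resolve_left (by simpa [MonoidHom.range_eq_bot_iff])
  simp [Subgroup.index_ker, hrange]

open Classical in
noncomputable def Subgroup.indexTwoEquiv (G : Type*) [Group G] :
    {H : Subgroup G // H.index = 2} ≃ {f : G →* Multiplicative (ZMod 2) // f ≠ 1} where
  toFun H := ⟨H.1.toZModTwo H.2, fun h => by
    have hker := H.1.ker_toZModTwo H.2
    rw [h, MonoidHom.ker_one] at hker
    simpa [← hker] using H.2⟩
  invFun f := ⟨f.1.ker, f.1.index_ker_eq_two f.2⟩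
  left_inv H := Subtype.ext (H.1.ker_toZModTwo H.2)
  right_inv f := by
    ext x
    by_cases hx : f.1 x = 1
    · simp [Subgroup.toZModTwo, hx]
    · simp [Subgroup.toZModTwo, Multiplicative.zmodTwo_eq_ofAdd_one hx]

namespace commSq

variable {G : Type*} [Group G]

lemma commutator_le : commutator G ≤ commSq G := le_sup_left

lemma sq_mem (x : G) : x ^ 2 ∈ commSq G :=
  le_sup_right (a := commutator G) (Subgroup.subset_closure ⟨x, rfl⟩)

noncomputable instance : CommGroup (G ⧸ commSq G) where
  mul_comm := by
    rintro ⟨a⟩ ⟨b⟩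
    refine QuotientGroup.eq.mpr (commutator_le ?_)
    rw [show (a * b)⁻¹ * (b * a) = ⁅b⁻¹, a⁻¹⁆ by group]
    exact Subgroup.commutator_mem_commutator (Subgroup.mem_top _) (Subgroup.mem_top _)

lemma sq_eq_one (x : G ⧸ commSq G) : x ^ 2 = 1 := by
  induction x using QuotientGroup.induction_on with
  | H a => exact (QuotientGroup.eq_one_iff _).mpr (sq_mem a)

lemma inv_eq_self (x : G ⧸ commSq G) : x⁻¹ = x :=
  inv_eq_of_mul_eq_one_right (by rw [← sq, sq_eq_one])

lemma eq_one_of_pow_eq_one_of_odd {x : G ⧸ commSq G} {n : ℕ} (hn : Odd n) (hx : x ^ n = 1) :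
    x = 1 := by
  obtain ⟨k, rfl⟩ := hn
  simpa [pow_succ, pow_mul, sq_eq_one] using hx

noncomputable instance : Module (ZMod 2) (Additive (G ⧸ commSq G)) :=
  AddCommGroup.zmodModule fun x => sq_eq_one x.toMul

variable {C : Type*} [CommGroup C]

lemma le_ker (hC : ∀ c : C, c ^ 2 = 1) (f : G →* C) : commSq G ≤ f.ker := by
  refine sup_le (Abelianization.commutator_subset_ker f) ((Subgroup.closure_le _).mpr ?_)
  rintro _ ⟨y, rfl⟩
  simp [hC]

def lift (hC : ∀ c : C, c ^ 2 = 1) (f : G →* C) : G ⧸ commSq G →* C :=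
  QuotientGroup.lift _ f (le_ker hC f)

def homEquiv (hC : ∀ c : C, c ^ 2 = 1) : (G ⧸ commSq G →* C) ≃ (G →* C) where
  toFun f := f.comp (QuotientGroup.mk' _)
  invFun f := lift hC f
  left_inv _ := QuotientGroup.monoidHom_ext _ rfl
  right_inv _ := rfl

end commSq

lemma Nat.card_subtype_ne {X : Type*} [Finite X] (a : X) :
    Nat.card {x : X // x ≠ a} = Nat.card X - 1 := by
  have := Fintype.ofFinite X
  classical
  simp [Nat.card_eq_fintype_card, Fintype.card_subtype_compl]

lemma card_monoidHom_multiplicative_pi_zmodTwo (ι : Type*) [Fintype ι] :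
    Nat.card (Multiplicative (ι → ZMod 2) →* Multiplicative (ZMod 2)) = 2 ^ Fintype.card ι := by
  classical
  rw [Nat.card_congr (AddMonoidHom.toMultiplicative.symm.trans
    ((AddMonoidHom.toZModLinearMapEquiv 2).toEquiv.trans
      (LinearEquiv.piRing (ZMod 2) (ZMod 2) ι (ZMod 2)).toEquiv)),
    Nat.card_fun, Nat.card_zmod, Nat.card_eq_fintype_card]

theorem card_index_eq_two_of_commSq_mulEquiv {G : Type*} [Group G] {n : ℕ}
    (e : G ⧸ commSq G ≃* Multiplicative (Fin n → ZMod 2)) :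
    Nat.card {H : Subgroup G // H.index = 2} = 2 ^ n - 1 := by
  have hC : ∀ c : Multiplicative (ZMod 2), c ^ 2 = 1 := by decide
  have hcard : Nat.card (G →* Multiplicative (ZMod 2)) = 2 ^ n := by
    rw [← Nat.card_congr (commSq.homEquiv hC), Nat.card_congr e.monoidHomCongrLeftEquiv,
      card_monoidHom_multiplicative_pi_zmodTwo, Fintype.card_fin]
  have : Finite (G →* Multiplicative (ZMod 2)) := Nat.finite_of_card_ne_zero (by simp [hcard])
  rw [Nat.card_congr (Subgroup.indexTwoEquiv G), Nat.card_subtype_ne, hcard]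

namespace FuchsianGroup

open FuchsianGens Multiplicative

section

variable {g α β γ : ℕ}

lemma map_longRelator {C : Type*} [CommGroup C] (f : FreeGroup (FuchsianGens g α β γ) →* C) :
    f (longRelator g α β γ) = (∏ j, f (X j)) * (∏ k, f (Y k)) * ∏ l, f (Z l) := by
  simp [longRelator, map_list_prod, Function.comp_def, commutatorElement_def, Fin.prod_univ_def]

variable (g α β γ) in
def mk : FreeGroup (FuchsianGens g α β γ) →* FuchsianGroup g α β γ :=
  PresentedGroup.mk _

lemma mk_eq_one_of_mem_rels {r : FreeGroup (FuchsianGens g α β γ)} (hr : r ∈ rels g α β γ) :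
    mk g α β γ r = 1 :=
  PresentedGroup.one_of_mem hr

variable (g α β γ) in
noncomputable def proj :
    FreeGroup (FuchsianGens g α β γ) →* FuchsianGroup g α β γ ⧸ commSq (FuchsianGroup g α β γ) :=
  (QuotientGroup.mk' _).comp (mk g α β γ)

lemma proj_eq_one_of_mem_rels {r : FreeGroup (FuchsianGens g α β γ)} (hr : r ∈ rels g α β γ) :
    proj g α β γ r = 1 := by
  simp [proj, mk_eq_one_of_mem_rels hr]

lemma proj_X (j : Fin α) : proj g α β γ (X j) = 1 :=
  commSq.eq_one_of_pow_eq_one_of_odd (n := 3) (by decide) <| by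
    rw [← map_pow]; exact proj_eq_one_of_mem_rels (Or.inl ⟨j, rfl⟩)

lemma proj_Z (l : Fin γ) : proj g α β γ (Z l) = 1 :=
  commSq.eq_one_of_pow_eq_one_of_odd (n := 7) (by decide) <| by
    rw [← map_pow]; exact proj_eq_one_of_mem_rels (Or.inr (Or.inr (Or.inl ⟨l, rfl⟩)))

lemma prod_proj_Y : ∏ k, proj g α β γ (Y k) = 1 := by
  simpa [map_longRelator, proj_X, proj_Z] using
    proj_eq_one_of_mem_rels (g := g) (α := α) (β := β) (γ := γ) (Or.inr (Or.inr (Or.inr rfl)))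

lemma proj_Y_last {b : ℕ} :
    proj g α (b + 1) γ (Y (Fin.last b)) = ∏ k : Fin b, proj g α (b + 1) γ (Y k.castSucc) := by
  have h := prod_proj_Y (g := g) (α := α) (β := b + 1) (γ := γ)
  rw [Fin.prod_univ_castSucc] at h
  rw [eq_inv_of_mul_eq_one_right h, commSq.inv_eq_self]

end

abbrev ModSqIndex (g b : ℕ) : Type := Fin g ⊕ Fin g ⊕ Fin b

section

variable {g α b γ : ℕ}

/-- The image of each generator in `𝔽₂^(2g+b)`, with basis `A_i, B_i, Y_k` (`k < b`); the long
relator forces `Y_b` to the sum of the other `Y_k`. -/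
def parity : FuchsianGens g α (b + 1) γ → ModSqIndex g b → ZMod 2
  | .inl (.inl i) => Pi.single (.inl i) 1
  | .inl (.inr i) => Pi.single (.inr (.inl i)) 1
  | .inr (.inl _) => 0
  | .inr (.inr (.inl k)) =>
      Fin.lastCases (∑ k', Pi.single (.inr (.inr k')) 1) (fun k' => Pi.single (.inr (.inr k')) 1) k
  | .inr (.inr (.inr _)) => 0

lemma parity_Y_castSucc (k : Fin b) :
    parity (.inr (.inr (.inl k.castSucc)) : FuchsianGens g α (b + 1) γ) =
      Pi.single (.inr (.inr k)) 1 := by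
  simp [parity]

lemma parity_Y_last :
    parity (.inr (.inr (.inl (Fin.last b))) : FuchsianGens g α (b + 1) γ) =
      ∑ k, Pi.single (.inr (.inr k)) 1 := by
  simp [parity]

variable (g α b γ) in
def parityHom :
    FreeGroup (FuchsianGens g α (b + 1) γ) →* Multiplicative (ModSqIndex g b → ZMod 2) :=
  FreeGroup.lift fun t => ofAdd (parity t)

lemma parityHom_of (t : FuchsianGens g α (b + 1) γ) :
    parityHom g α b γ (.of t) = ofAdd (parity t) :=
  FreeGroup.lift_apply_of

lemma parityHom_X (j : Fin α) : parityHom g α b γ (X j) = 1 :=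
  parityHom_of _

lemma parityHom_Z (l : Fin γ) : parityHom g α b γ (Z l) = 1 :=
  parityHom_of _

lemma parityHom_Y_castSucc (k : Fin b) :
    parityHom g α b γ (Y k.castSucc) = ofAdd (Pi.single (.inr (.inr k)) 1) :=
  (parityHom_of _).trans (congrArg ofAdd (parity_Y_castSucc k))

lemma parityHom_Y_last :
    parityHom g α b γ (Y (Fin.last b)) = ofAdd (∑ k, Pi.single (.inr (.inr k)) 1) :=
  (parityHom_of _).trans (congrArg ofAdd parity_Y_last)

lemma prod_parityHom_Y : ∏ k, parityHom g α b γ (Y k) = 1 := by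
  rw [Fin.prod_univ_castSucc, parityHom_Y_last]
  simp only [parityHom_Y_castSucc, ← ofAdd_sum, ← ofAdd_add, pi_zmodTwo_add_self, ofAdd_zero]

lemma parityHom_eq_one_of_mem_rels {r : FreeGroup (FuchsianGens g α (b + 1) γ)}
    (hr : r ∈ rels g α (b + 1) γ) : parityHom g α b γ r = 1 := by
  rcases hr with ⟨j, rfl⟩ | ⟨k, rfl⟩ | ⟨l, rfl⟩ | rfl
  · simp [parityHom_X]
  · simp [multiplicative_pi_zmodTwo_sq]
  · simp [parityHom_Z]
  · simp [map_longRelator, parityHom_X, parityHom_Z, prod_parityHom_Y]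

variable (g α b γ) in
noncomputable def toParity :
    FuchsianGroup g α (b + 1) γ ⧸ commSq (FuchsianGroup g α (b + 1) γ) →*
      Multiplicative (ModSqIndex g b → ZMod 2) :=
  commSq.lift multiplicative_pi_zmodTwo_sq
    (PresentedGroup.toGroup fun _ => parityHom_eq_one_of_mem_rels)

lemma toParity_proj (r : FreeGroup (FuchsianGens g α (b + 1) γ)) :
    toParity g α b γ (proj g α (b + 1) γ r) = parityHom g α b γ r :=
  rfl

variable (g α b γ) in
def basisGen : ModSqIndex g b → FuchsianGens g α (b + 1) γ
  | .inl i => .inl (.inl i)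
  | .inr (.inl i) => .inl (.inr i)
  | .inr (.inr k) => .inr (.inr (.inl k.castSucc))

lemma parity_basisGen (s : ModSqIndex g b) : parity (basisGen g α b γ s) = Pi.single s 1 := by
  rcases s with i | i | k
  · simp [basisGen, parity]
  · simp [basisGen, parity]
  · exact parity_Y_castSucc k

variable (g α b γ) in
noncomputable def ofParity : (ModSqIndex g b → ZMod 2) →ₗ[ZMod 2]
    Additive (FuchsianGroup g α (b + 1) γ ⧸ commSq (FuchsianGroup g α (b + 1) γ)) :=
  Fintype.linearCombination (ZMod 2) fun s => .ofMul (proj g α (b + 1) γ (.of (basisGen g α b γ s)))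

lemma ofParity_single (s : ModSqIndex g b) :
    ofParity g α b γ (Pi.single s 1) = .ofMul (proj g α (b + 1) γ (.of (basisGen g α b γ s))) := by
  simp [ofParity]

lemma ofParity_parity_basisGen (s : ModSqIndex g b) :
    ofParity g α b γ (parity (basisGen g α b γ s)) =
      .ofMul (proj g α (b + 1) γ (.of (basisGen g α b γ s))) := by
  rw [parity_basisGen, ofParity_single]

lemma ofParity_parity (t : FuchsianGens g α (b + 1) γ) :
    ofParity g α b γ (parity t) = .ofMul (proj g α (b + 1) γ (.of t)) := by
  rcases t with (i | i) | j | k | l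
  · exact ofParity_parity_basisGen (.inl i)
  · exact ofParity_parity_basisGen (.inr (.inl i))
  · exact (map_zero _).trans (congrArg Additive.ofMul (proj_X j).symm)
  · induction k using Fin.lastCases with
    | last =>
      rw [parity_Y_last, map_sum]
      simp only [ofParity_single]
      exact (ofMul_prod _ _).symm.trans (congrArg Additive.ofMul proj_Y_last.symm)
    | cast k => exact ofParity_parity_basisGen (.inr (.inr k))
  · exact (map_zero _).trans (congrArg Additive.ofMul (proj_Z l).symm)

lemma ofParity_toParity_proj_of (t : FuchsianGens g α (b + 1) γ) :
    (ofParity g α b γ (toParity g α b γ (proj g α (b + 1) γ (.of t))).toAdd).toMul =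
      proj g α (b + 1) γ (.of t) := by
  rw [toParity_proj, parityHom_of, toAdd_ofAdd, ofParity_parity, toMul_ofMul]

lemma toParity_ofParity (v : ModSqIndex g b → ZMod 2) :
    toParity g α b γ (ofParity g α b γ v).toMul = ofAdd v := by
  have h : ((MonoidHom.toAdditiveLeft (toParity g α b γ)).toZModLinearMap 2).comp
      (ofParity g α b γ) = LinearMap.id :=
    (Pi.basisFun (ZMod 2) (ModSqIndex g b)).ext fun s => by
      rw [Pi.basisFun_apply, LinearMap.comp_apply, ofParity_single]
      exact (congrArg toAdd (parityHom_of _)).trans (parity_basisGen s)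
  exact congrArg ofAdd (LinearMap.congr_fun h v)

variable (g α b γ) in
noncomputable def modSqEquiv :
    FuchsianGroup g α (b + 1) γ ⧸ commSq (FuchsianGroup g α (b + 1) γ) ≃*
      Multiplicative (ModSqIndex g b → ZMod 2) :=
  MonoidHom.toMulEquiv (toParity g α b γ)
    (AddMonoidHom.toMultiplicativeLeft (ofParity g α b γ).toAddMonoidHom)
    (QuotientGroup.monoidHom_ext _ <| PresentedGroup.ext ofParity_toParity_proj_of)
    (MonoidHom.ext fun v => toParity_ofParity v.toAdd)

end

end FuchsianGroup

/-- For the Fuchsian presentation `M` of signature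
`(g; 3^[α], 2^[β], 7^[γ])` with `β ≥ 1`, the quotient `M/(M′M²)` is an elementary
abelian 2-group of rank `2g + β − 1`, and hence `M` has exactly `2^(2g+β−1) − 1`
subgroups of index 2. -/
theorem fuchsian_mod_squares_elementary_abelian
    (g α β γ : ℕ) (hβ : 1 ≤ β) :
    Nonempty ((FuchsianGroup g α β γ ⧸ commSq (FuchsianGroup g α β γ)) ≃*
      Multiplicative (Fin (2 * g + β - 1) → ZMod 2)) ∧
    Nat.card {H : Subgroup (FuchsianGroup g α β γ) // H.index = 2} =
      2 ^ (2 * g + β - 1) - 1 := by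
  obtain ⟨b, rfl⟩ := Nat.exists_eq_add_of_le' hβ
  have hcard : Fintype.card (FuchsianGroup.ModSqIndex g b) = 2 * g + (b + 1) - 1 := by
    simp only [Fintype.card_sum, Fintype.card_fin]; omega
  let e := (FuchsianGroup.modSqEquiv g α b γ).trans (LinearEquiv.funCongrLeft (ZMod 2) (ZMod 2)
    (Fintype.equivFinOfCardEq hcard).symm).toAddEquiv.toMultiplicative
  exact ⟨⟨e⟩, card_index_eq_two_of_commSq_mulEquiv e⟩
end
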